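/- arXiv:2203.02714 — 3 statements merged into one kernel-verified Lean document; each statement's English description precedes it below -/
import Mathlib

section
/- Let E be a real Hilbert space (e.g., EuclideanSpace ℝ (Fin k)), let L : E → ℝ be differentiable on a neighborhood of a point w with gradient map ∇L, suppose the map ∇L : E → E is differentiable at w with derivative H : E →L[ℝ] E, that H is self-adjoint, and that ∇L(w) ≠ 0. Then for every ρ ≥ 0 the function u ↦ L(u) + ρ·‖∇L(u)‖ is differentiable at w and its gradient at w equals ∇L(w) + (ρ/‖∇L(w)‖) · H(∇L(w)); in particular, with ε̂ = (ρ/‖∇L(w)‖) • ∇L(w), this gradient equals ∇L(w) + H(ε̂). -/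
open scoped RealInnerProductSpace

/-! The chain rule gives `d‖∇L‖(w) v = ⟪∇L(w), H v⟫ / ‖∇L(w)‖`, and self-adjointness of `H` turns
this into `⟪H ∇L(w), v⟫ / ‖∇L(w)‖`, so the gradient of `ρ‖∇L‖` at `w` is `H ε̂`. -/

section NormDeriv

variable {E F : Type*} [NormedAddCommGroup E] [InnerProductSpace ℝ E]

theorem hasStrictFDerivAt_norm_of_ne_zero {x : E} (hx : x ≠ 0) :
    HasStrictFDerivAt (‖·‖) (‖x‖⁻¹ • innerSL ℝ x) x := by
  have hsq : ‖x‖ ^ 2 ≠ 0 := pow_ne_zero 2 (norm_ne_zero_iff.2 hx)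
  have h := (Real.hasStrictDerivAt_sqrt hsq).comp_hasStrictFDerivAt x
    (hasStrictFDerivAt_norm_sq x)
  have hfun : ((fun t => √t) ∘ fun y : E => ‖y‖ ^ 2) = (‖·‖) :=
    funext fun y => Real.sqrt_sq (norm_nonneg y)
  have hderiv : (1 / (2 * √(‖x‖ ^ 2))) • 2 • innerSL ℝ x = ‖x‖⁻¹ • innerSL ℝ x := by
    rw [Real.sqrt_sq (norm_nonneg x), ← Nat.cast_smul_eq_nsmul ℝ, smul_smul]
    congr 1
    push_cast
    field_simp
  rwa [hfun, hderiv] at h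

variable [NormedAddCommGroup F] [NormedSpace ℝ F]

theorem HasFDerivAt.norm {f : F → E} {f' : F →L[ℝ] E} {x : F} (hf : HasFDerivAt f f' x)
    (hx : f x ≠ 0) :
    HasFDerivAt (‖f ·‖) (‖f x‖⁻¹ • (innerSL ℝ (f x)).comp f') x :=
  ((hasStrictFDerivAt_norm_of_ne_zero hx).hasFDerivAt.comp x hf).congr_fderiv rfl

end NormDeriv

section Gradient

variable {E : Type*} [NormedAddCommGroup E] [InnerProductSpace ℝ E] [CompleteSpace E]
  {f g : E → ℝ} {f' g' x : E}

theorem HasGradientAt.add (hf : HasGradientAt f f' x) (hg : HasGradientAt g g' x) :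
    HasGradientAt (fun y => f y + g y) (f' + g') x := by
  rw [hasGradientAt_iff_hasFDerivAt, map_add]
  exact hf.hasFDerivAt.add hg.hasFDerivAt

theorem HasGradientAt.const_mul (c : ℝ) (hf : HasGradientAt f f' x) :
    HasGradientAt (fun y => c * f y) (c • f') x := by
  rw [hasGradientAt_iff_hasFDerivAt, map_smul]
  exact hf.hasFDerivAt.const_mul c

theorem HasFDerivAt.hasGradientAt_norm {φ : E → E} {H : E →L[ℝ] E}
    (hφ : HasFDerivAt φ H x) (hH : ∀ u v : E, ⟪H u, v⟫ = ⟪u, H v⟫) (hx : φ x ≠ 0) :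
    HasGradientAt (‖φ ·‖) (‖φ x‖⁻¹ • H (φ x)) x := by
  rw [hasGradientAt_iff_hasFDerivAt]
  refine (hφ.norm hx).congr_fderiv ?_
  ext v
  simp [hH]

end Gradient

theorem gradient_of_sam_regularized_objective_general
    {E : Type*} [NormedAddCommGroup E] [InnerProductSpace ℝ E] [CompleteSpace E]
    (L : E → ℝ) (gradL : E → E) (w : E)
    (hL : ∀ᶠ u in nhds w, HasGradientAt L (gradL u) u)
    (H : E →L[ℝ] E) (hH : HasFDerivAt gradL H w)
    (hself : ∀ x y : E, ⟪H x, y⟫ = ⟪x, H y⟫)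
    (hne : gradL w ≠ 0) (ρ : ℝ) :
    HasGradientAt (fun u => L u + ρ * ‖gradL u‖)
      (gradL w + (ρ / ‖gradL w‖) • H (gradL w)) w ∧
    gradL w + (ρ / ‖gradL w‖) • H (gradL w) =
      gradL w + H ((ρ / ‖gradL w‖) • gradL w) := by
  refine ⟨?_, by rw [map_smul]⟩
  rw [div_eq_mul_inv, ← smul_smul]
  exact hL.self_of_nhds.add ((hH.hasGradientAt_norm hself hne).const_mul ρ)

/-- Rigorous content of Equation (4) of the paper: if `L` is differentiable near `w` with
gradient map `∇L`, the gradient map is differentiable at `w` with self-adjoint derivative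
(Hessian) `H`, and `∇L(w) ≠ 0`, then `u ↦ L(u) + ρ·‖∇L(u)‖` has gradient
`∇L(w) + (ρ/‖∇L(w)‖)·H(∇L(w)) = ∇L(w) + H(ε̂)` at `w`, where `ε̂ = (ρ/‖∇L(w)‖) • ∇L(w)`. -/
theorem gradient_of_sam_regularized_objective
    {E : Type*} [NormedAddCommGroup E] [InnerProductSpace ℝ E] [CompleteSpace E]
    (L : E → ℝ) (gradL : E → E) (w : E)
    (hL : ∀ᶠ u in nhds w, HasGradientAt L (gradL u) u)
    (H : E →L[ℝ] E) (hH : HasFDerivAt gradL H w)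
    (hself : ∀ x y : E, ⟪H x, y⟫ = ⟪x, H y⟫)
    (hne : gradL w ≠ 0) (ρ : ℝ) (hρ : 0 ≤ ρ) :
    HasGradientAt (fun u => L u + ρ * ‖gradL u‖)
      (gradL w + (ρ / ‖gradL w‖) • H (gradL w)) w ∧
    gradL w + (ρ / ‖gradL w‖) • H (gradL w) =
      gradL w + H ((ρ / ‖gradL w‖) • gradL w) :=
  gradient_of_sam_regularized_objective_general L gradL w hL H hH hself hne ρ
end

section
/- Let k be a positive integer and let Z_1, …, Z_k be independent standard Gaussian random variables (equivalently, consider the product of k copies of the standard Gaussian measure on ℝ). Then for every real x > 0, the probability that ∑_{i=1}^k Z_i² ≥ k + 2·√(k·x) + 2·x is at most exp(−x). -/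
/-!
Chernoff's method. For `2t < 1` a standard Gaussian `Z` has `E exp (t Z²) = (1 - 2t)^(-1/2)`,
so `P(χ²_k ≥ T) ≤ exp (-t T) (1 - 2t)^(-k/2)`. With `a = √k`, `b = √x`, `T = a² + 2ab + 2b²`
and `t = b / (a + 2b)` one has `(1 - 2t)⁻¹ = y := (a + 2b) / a`, and the elementary bound
`log y ≤ (y - y⁻¹) / 2` for `y ≥ 1` (that is, `u ≤ sinh u` for `u ≥ 0`) makes the exponent
`-t T + (a² / 2) log y` at most `-b² = -x`.
-/

open MeasureTheory ProbabilityTheory Real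
open scoped NNReal

section Gaussian

variable {v : ℝ≥0} {c : ℝ}

lemma integrable_gaussianReal_iff {μ : ℝ} (hv : v ≠ 0) {f : ℝ → ℝ} :
    Integrable f (gaussianReal μ v) ↔ Integrable (fun x ↦ gaussianPDFReal μ v x * f x) := by
  rw [gaussianReal_of_var_ne_zero μ hv, integrable_withDensity_iff_integrable_smul'
    (measurable_gaussianPDF μ v) (ae_of_all _ fun _ ↦ gaussianPDF_lt_top)]
  simp only [toReal_gaussianPDF, smul_eq_mul]

lemma gaussianPDFReal_zero_mul_exp_mul_sq (hv : v ≠ 0) (z : ℝ) :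
    gaussianPDFReal 0 v z * rexp (c * z ^ 2)
      = (√(2 * π * v))⁻¹ * rexp (-((1 - 2 * c * v) / (2 * v)) * z ^ 2) := by
  have : (v : ℝ) ≠ 0 := by exact_mod_cast hv
  rw [gaussianPDFReal, mul_assoc, ← exp_add]
  congr 2
  field_simp
  ring

lemma integrable_exp_mul_sq_gaussianReal (hv : v ≠ 0) (hc : 2 * c * v < 1) :
    Integrable (fun z ↦ rexp (c * z ^ 2)) (gaussianReal 0 v) := by
  have hv_pos : (0 : ℝ) < v := by positivity
  rw [integrable_gaussianReal_iff hv]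
  simp_rw [gaussianPDFReal_zero_mul_exp_mul_sq hv]
  exact (integrable_exp_neg_mul_sq (div_pos (by linarith) (by positivity))).const_mul _

lemma mgf_sq_gaussianReal (hv : v ≠ 0) (hc : 2 * c * v < 1) :
    mgf (fun z ↦ z ^ 2) (gaussianReal 0 v) c = (√(1 - 2 * c * v))⁻¹ := by
  have hv_pos : (0 : ℝ) < v := by positivity
  rw [mgf, integral_gaussianReal_eq_integral_smul hv]
  simp_rw [smul_eq_mul, gaussianPDFReal_zero_mul_exp_mul_sq hv]
  rw [integral_const_mul, integral_gaussian, ← sqrt_inv, ← sqrt_inv, ← sqrt_mul (by positivity)]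
  congr 1
  have : 1 - 2 * c * v ≠ 0 := by linarith
  field_simp

end Gaussian

section Pi

variable {ι Ω : Type*} [Fintype ι] [MeasurableSpace Ω] {μ : Measure Ω} [SigmaFinite μ]
  {X : Ω → ℝ} {t : ℝ}

lemma integrable_exp_mul_sum_pi (h : Integrable (fun ω ↦ rexp (t * X ω)) μ) :
    Integrable (fun y : ι → Ω ↦ rexp (t * ∑ i, X (y i))) (Measure.pi fun _ ↦ μ) := by
  simp_rw [Finset.mul_sum, exp_sum]
  exact Integrable.fintype_prod fun _ ↦ h

lemma mgf_sum_pi :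
    mgf (fun y : ι → Ω ↦ ∑ i, X (y i)) (Measure.pi fun _ ↦ μ) t = mgf X μ t ^ Fintype.card ι := by
  simp_rw [mgf, Finset.mul_sum, exp_sum]
  exact integral_fintype_prod_eq_pow (ι := ι) (μ := μ) (fun ω ↦ rexp (t * X ω))

end Pi

lemma log_le_sub_inv_div_two {y : ℝ} (hy : 1 ≤ y) : log y ≤ (y - y⁻¹) / 2 := by
  rw [← sinh_log (by linarith)]
  exact self_le_sinh_iff.mpr (log_nonneg hy)

lemma laurent_massart_exponent_le {a b : ℝ} (ha : 0 < a) (hb : 0 ≤ b) :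
    a ^ 2 / 2 * log ((a + 2 * b) / a)
      ≤ b / (a + 2 * b) * (a ^ 2 + 2 * a * b + 2 * b ^ 2) - b ^ 2 := by
  have hab : 0 < a + 2 * b := by linarith
  calc a ^ 2 / 2 * log ((a + 2 * b) / a)
      ≤ a ^ 2 / 2 * (((a + 2 * b) / a - ((a + 2 * b) / a)⁻¹) / 2) := by
        gcongr
        exact log_le_sub_inv_div_two ((one_le_div ha).mpr (by linarith))
    _ = b / (a + 2 * b) * (a ^ 2 + 2 * a * b + 2 * b ^ 2) - b ^ 2 := by
        field_simp
        ring

lemma exp_neg_mul_mul_inv_sqrt_pow_le {a b : ℝ} (ha : 0 < a) (hb : 0 ≤ b) {k : ℕ}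
    (hk : (k : ℝ) = a ^ 2) :
    rexp (-(b / (a + 2 * b)) * (a ^ 2 + 2 * a * b + 2 * b ^ 2))
      * (√(1 - 2 * (b / (a + 2 * b))))⁻¹ ^ k ≤ rexp (-b ^ 2) := by
  have hab : 0 < a + 2 * b := by linarith
  have hy : 0 < (a + 2 * b) / a := by positivity
  have h_inv : (√(1 - 2 * (b / (a + 2 * b))))⁻¹ = √((a + 2 * b) / a) := by
    rw [← sqrt_inv]
    congr 1
    field_simp [ha.ne']
    ring
  have h_pow : √((a + 2 * b) / a) ^ k = rexp (a ^ 2 / 2 * log ((a + 2 * b) / a)) := by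
    rw [← exp_log (sqrt_pos.mpr hy), ← exp_nat_mul, log_sqrt hy.le, hk]
    ring_nf
  rw [h_inv, h_pow, ← exp_add, exp_le_exp]
  linarith [laurent_massart_exponent_le ha hb]

/-- The Laurent–Massart chi-square upper-tail bound: if `Z₁, …, Z_k` are i.i.d. standard
Gaussians then `P(∑ Zᵢ² ≥ k + 2√(kx) + 2x) ≤ exp(-x)` for all `x > 0`. -/
theorem chi_square_tail_bound (k : ℕ) (hk : 0 < k) (x : ℝ) (hx : 0 < x) :
    (Measure.pi fun _ : Fin k => gaussianReal 0 1)
      {z | (k : ℝ) + 2 * Real.sqrt (k * x) + 2 * x ≤ ∑ i, (z i) ^ 2} ≤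
    ENNReal.ofReal (Real.exp (-x)) := by
  set a := √(k : ℝ)
  set b := √x
  have ha : 0 < a := sqrt_pos.mpr (by exact_mod_cast hk)
  have hb : 0 ≤ b := sqrt_nonneg x
  have hk_sq : (k : ℝ) = a ^ 2 := (sq_sqrt k.cast_nonneg).symm
  have hx_sq : x = b ^ 2 := (sq_sqrt hx.le).symm
  have h_level : (k : ℝ) + 2 * √(k * x) + 2 * x = a ^ 2 + 2 * a * b + 2 * b ^ 2 := by
    rw [sqrt_mul k.cast_nonneg, ← hk_sq, ← hx_sq]
    ring
  set t := b / (a + 2 * b)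
  have ht : 2 * t * ((1 : ℝ≥0) : ℝ) < 1 := by
    rw [NNReal.coe_one, mul_one, mul_div_assoc', div_lt_one (by positivity)]
    linarith
  have h_chernoff := measure_ge_le_exp_mul_mgf (a ^ 2 + 2 * a * b + 2 * b ^ 2) (by positivity)
    (integrable_exp_mul_sum_pi (ι := Fin k) (X := fun z ↦ z ^ 2)
      (integrable_exp_mul_sq_gaussianReal one_ne_zero ht))
  rw [mgf_sum_pi (X := fun z ↦ z ^ 2), mgf_sq_gaussianReal one_ne_zero ht, Fintype.card_fin,
    NNReal.coe_one, mul_one] at h_chernoff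
  rw [← ofReal_measureReal, h_level, hx_sq]
  exact ENNReal.ofReal_le_ofReal (h_chernoff.trans (exp_neg_mul_mul_inv_sqrt_pow_le ha hb hk_sq))
end

section
/- Let k be a positive integer, let f : EuclideanSpace ℝ (Fin k) → ℝ be measurable with 0 ≤ f(u) ≤ 1 for all u, let w ∈ EuclideanSpace ℝ (Fin k), let σ' > 0, let n ≥ 2 be an integer, and set ρ' = σ'·√k·(1 + √((log n)/k)). Let μ be the Gaussian measure on EuclideanSpace ℝ (Fin k) whose coordinates are independent centered Gaussians of variance σ'^2. Then ∫ f(w + ε) dμ(ε) ≤ (1 − 1/√n) · sup_{‖ε‖₂ ≤ ρ'} f(w + ε) + 1/√n; in particular ∫ f(w + ε) dμ(ε) ≤ sup_{‖ε‖₂ ≤ ρ'} f(w + ε) + 1/√n. -/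
/-
On the ball `B` of radius `ρ'` the integrand is at most its supremum `S ≤ 1` and off `B` it is
at most `1`, so the smoothed loss is at most `S (1 - p) + p ≤ (1 - δ) S + δ` for any `δ ≥ p`,
where `p` is the Gaussian mass outside `B`. Chernoff's inequality for `‖ε‖²`, whose moment
generating function is `(1 - 2σ'²t)^(-k/2)`, bounds `p`: writing `ρ' = σ'(√k + b)` with
`b = √(log n)` and choosing `1 - 2σ'²t = (√k / (√k + b))²`, the bound becomes
`(1 + b/√k)^k exp(-(2√k b + b²)/2) ≤ exp(-b²/2) = 1/√n` by `1 + x ≤ exp x`.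
-/

open MeasureTheory ProbabilityTheory Real
open scoped NNReal

namespace ProbabilityTheory

section GaussianSquare

variable {v : ℝ≥0} {t : ℝ}

lemma gaussianPDFReal_zero_mul_exp_mul_sq (hv : v ≠ 0) (x : ℝ) :
    gaussianPDFReal 0 v x * exp (t * x ^ 2) =
      (√(2 * π * v))⁻¹ * exp (-((1 - 2 * v * t) / (2 * v)) * x ^ 2) := by
  have hv' : (v : ℝ) ≠ 0 := by exact_mod_cast hv
  rw [gaussianPDFReal, mul_assoc, ← exp_add]
  congr 2
  field_simp
  ring

lemma integrable_exp_mul_sq_gaussianReal (hv : v ≠ 0) (ht : 2 * v * t < 1) :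
    Integrable (fun x ↦ exp (t * x ^ 2)) (gaussianReal 0 v) := by
  have hb : 0 < (1 - 2 * v * t) / (2 * v) := div_pos (by linarith) (by positivity)
  rw [gaussianReal_of_var_ne_zero 0 hv, integrable_withDensity_iff_integrable_smul'
    (measurable_gaussianPDF 0 v) (ae_of_all _ fun _ ↦ gaussianPDF_lt_top)]
  simp_rw [toReal_gaussianPDF, smul_eq_mul, gaussianPDFReal_zero_mul_exp_mul_sq hv]
  exact (integrable_exp_neg_mul_sq hb).const_mul _

lemma mgf_sq_gaussianReal (hv : v ≠ 0) (ht : 2 * v * t < 1) :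
    mgf (fun x ↦ x ^ 2) (gaussianReal 0 v) t = (√(1 - 2 * v * t))⁻¹ := by
  have hb : 0 < 1 - 2 * v * t := by linarith
  have hpi : π / ((1 - 2 * v * t) / (2 * v)) = 2 * π * v / (1 - 2 * v * t) := by
    field_simp
  have hroot : √(2 * π * v) ≠ 0 := by positivity
  rw [mgf, integral_gaussianReal_eq_integral_smul hv]
  simp_rw [smul_eq_mul, gaussianPDFReal_zero_mul_exp_mul_sq hv]
  rw [integral_const_mul, integral_gaussian, hpi, sqrt_div' _ hb.le]
  field_simp

end GaussianSquare

section ProductSum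

variable {ι E : Type*} [Fintype ι] [MeasurableSpace E] {ν : Measure E} [SigmaFinite ν]

lemma integrable_exp_mul_sum_pi {g : E → ℝ} {t : ℝ}
    (hg : Integrable (fun y ↦ exp (t * g y)) ν) :
    Integrable (fun x : ι → E ↦ exp (t * ∑ i, g (x i))) (Measure.pi fun _ ↦ ν) := by
  simp_rw [Finset.mul_sum, exp_sum]
  exact Integrable.fintype_prod fun _ ↦ hg

lemma mgf_sum_pi (g : E → ℝ) (t : ℝ) :
    mgf (fun x : ι → E ↦ ∑ i, g (x i)) (Measure.pi fun _ ↦ ν) t =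
      mgf g ν t ^ Fintype.card ι := by
  simp_rw [mgf, Finset.mul_sum, exp_sum]
  exact integral_fintype_prod_eq_pow fun y ↦ exp (t * g y)

end ProductSum

lemma measureReal_sum_sq_ge_le {ι : Type*} [Fintype ι] {v : ℝ≥0} (hv : v ≠ 0) {t : ℝ}
    (ht0 : 0 ≤ t) (ht : 2 * v * t < 1) (r : ℝ) :
    (Measure.pi fun _ : ι ↦ gaussianReal 0 v).real {x | r ≤ ∑ i, x i ^ 2} ≤
      exp (-t * r) * (√(1 - 2 * v * t))⁻¹ ^ Fintype.card ι := by
  have hint := integrable_exp_mul_sum_pi (ι := ι) (integrable_exp_mul_sq_gaussianReal hv ht)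
  calc _ ≤ exp (-t * r) *
        mgf (fun x : ι → ℝ ↦ ∑ i, x i ^ 2) (Measure.pi fun _ ↦ gaussianReal 0 v) t :=
        measure_ge_le_exp_mul_mgf r ht0 hint
    _ = _ := by rw [mgf_sum_pi (fun y ↦ y ^ 2), mgf_sq_gaussianReal hv ht]

end ProbabilityTheory

lemma one_add_div_sqrt_pow_mul_exp_le (k : ℕ) {b : ℝ} (hb : 0 ≤ b) :
    (1 + b / √k) ^ k * exp (-(2 * √k * b + b ^ 2) / 2) ≤ exp (-(b ^ 2 / 2)) := by
  have hpow : (1 + b / √k) ^ k ≤ exp (√k * b) := by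
    calc (1 + b / √k) ^ k ≤ exp (b / √k) ^ k := by
          gcongr
          linarith [add_one_le_exp (b / √k)]
      _ = exp (√k * b) := by rw [← exp_nat_mul, ← mul_div_assoc, mul_div_right_comm, div_sqrt]
  calc _ ≤ exp (√k * b) * exp (-(2 * √k * b + b ^ 2) / 2) := by gcongr
    _ = exp (-(b ^ 2 / 2)) := by rw [← exp_add]; ring_nf

lemma exp_neg_log_div_two {x : ℝ} (hx : 0 < x) : exp (-(log x / 2)) = 1 / √x := by
  rw [exp_neg, ← log_sqrt hx.le, exp_log (sqrt_pos.2 hx), one_div]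

namespace ProbabilityTheory

noncomputable def isotropicGaussian (ι : Type*) [Fintype ι] (v : ℝ≥0) :
    Measure (EuclideanSpace ℝ ι) :=
  (Measure.pi fun _ : ι ↦ gaussianReal 0 v).map (MeasurableEquiv.toLp 2 (ι → ℝ))

variable {ι : Type*} [Fintype ι]

instance (v : ℝ≥0) : IsProbabilityMeasure (isotropicGaussian ι v) :=
  Measure.isProbabilityMeasure_map (MeasurableEquiv.measurable _).aemeasurable

lemma isotropicGaussian_real_compl_closedBall_le [Nonempty ι] {v : ℝ≥0} (hv : v ≠ 0) {b : ℝ}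
    (hb : 0 ≤ b) :
    (isotropicGaussian ι v).real (Metric.closedBall 0 (√v * (√(Fintype.card ι) + b)))ᶜ ≤
      exp (-(b ^ 2 / 2)) := by
  set k := Fintype.card ι
  set ρ := √v * (√k + b)
  have hv0 : (0 : ℝ) < v := by positivity
  have hk : 0 < √k := by positivity
  set q := √k / (√k + b)
  have hq0 : 0 < q := by positivity
  have hq : q * (√k + b) = √k := div_mul_cancel₀ _ (by positivity)
  set t := (1 - q ^ 2) / (2 * v)
  have ht0 : 0 ≤ t := div_nonneg (by nlinarith) (by positivity)
  have h2vt : 1 - 2 * v * t = q ^ 2 := by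
    simp only [t]; field_simp; ring
  have htρ : t * ρ ^ 2 = (2 * √k * b + b ^ 2) / 2 := by
    have : t * ρ ^ 2 = ((√k + b) ^ 2 - (q * (√k + b)) ^ 2) / 2 := by
      simp only [t, ρ]; rw [mul_pow, sq_sqrt hv0.le]; field_simp
    rw [this, hq]; ring
  have hsub : MeasurableEquiv.toLp 2 (ι → ℝ) ⁻¹' (Metric.closedBall 0 ρ)ᶜ ⊆
      {x | ρ ^ 2 ≤ ∑ i, x i ^ 2} := by
    intro x hx
    simp only [Set.mem_preimage, Set.mem_compl_iff, Metric.mem_closedBall, dist_zero_right,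
      not_le] at hx
    simpa [EuclideanSpace.real_norm_sq_eq] using pow_le_pow_left₀ (by positivity) hx.le 2
  calc (isotropicGaussian ι v).real (Metric.closedBall 0 ρ)ᶜ
      ≤ (Measure.pi fun _ : ι ↦ gaussianReal 0 v).real {x | ρ ^ 2 ≤ ∑ i, x i ^ 2} := by
        rw [isotropicGaussian, map_measureReal_apply (MeasurableEquiv.measurable _)
          measurableSet_closedBall.compl]
        exact measureReal_mono hsub
    _ ≤ exp (-t * ρ ^ 2) * (√(1 - 2 * v * t))⁻¹ ^ k :=
        measureReal_sum_sq_ge_le hv ht0 (by nlinarith) _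
    _ = (1 + b / √k) ^ k * exp (-(2 * √k * b + b ^ 2) / 2) := by
        rw [h2vt, sqrt_sq hq0.le, mul_comm]
        congr 2
        · simp only [q]; field_simp
        · rw [neg_mul, htρ, neg_div]
    _ ≤ exp (-(b ^ 2 / 2)) := one_add_div_sqrt_pow_mul_exp_le k hb

end ProbabilityTheory

lemma integral_le_of_le_on_of_measureReal_compl_le {α : Type*} [MeasurableSpace α]
    {μ : Measure α} [IsProbabilityMeasure μ] {f : α → ℝ} (hf : Integrable f μ)
    (hf1 : ∀ x, f x ≤ 1) {s : Set α} (hs : MeasurableSet s) {S : ℝ} (hfS : ∀ x ∈ s, f x ≤ S)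
    (hS : S ≤ 1) {δ : ℝ} (hδ : μ.real sᶜ ≤ δ) :
    ∫ x, f x ∂μ ≤ (1 - δ) * S + δ := by
  have hin : ∫ x in s, f x ∂μ ≤ μ.real s * S := by
    simpa using setIntegral_mono_on hf.integrableOn (integrable_const S).integrableOn hs hfS
  have hout : ∫ x in sᶜ, f x ∂μ ≤ μ.real sᶜ := by
    simpa using setIntegral_mono_on hf.integrableOn (integrable_const (1 : ℝ)).integrableOn
      hs.compl fun x _ ↦ hf1 x
  have hsum : μ.real s + μ.real sᶜ = 1 := by
    rw [measureReal_add_measureReal_compl hs, probReal_univ]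
  rw [← integral_add_compl hs hf]
  nlinarith [mul_le_mul_of_nonneg_right hδ (sub_nonneg.2 hS)]

lemma integral_le_one_sub_mul_sSup_image_add {α : Type*} [MeasurableSpace α]
    {μ : Measure α} [IsProbabilityMeasure μ] {f : α → ℝ} (hf : Integrable f μ)
    (hf1 : ∀ x, f x ≤ 1) {s : Set α} (hs : MeasurableSet s) (hs' : s.Nonempty) {δ : ℝ}
    (hδ : μ.real sᶜ ≤ δ) :
    ∫ x, f x ∂μ ≤ (1 - δ) * sSup (f '' s) + δ := by
  have hle : ∀ y ∈ f '' s, y ≤ 1 := Set.forall_mem_image.2 fun x _ ↦ hf1 x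
  exact integral_le_of_le_on_of_measureReal_compl_le hf hf1 hs
    (fun x hx ↦ le_csSup ⟨1, hle⟩ (Set.mem_image_of_mem f hx)) (csSup_le (hs'.image f) hle) hδ

/-- The step leading to Equation (36): for a `[0,1]`-valued measurable loss `f`, the
Gaussian-smoothed loss at `w` is bounded by the worst-case loss over the Euclidean ball of
radius `ρ' = σ'·√k·(1 + √((log n)/k))` up to the additive failure probability `1/√n`. -/
theorem gaussian_smoothed_loss_le_ball_sup (k : ℕ) (hk : 0 < k)
    (f : EuclideanSpace ℝ (Fin k) → ℝ) (hf : Measurable f)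
    (hf01 : ∀ u, 0 ≤ f u ∧ f u ≤ 1)
    (w : EuclideanSpace ℝ (Fin k)) (σ' : ℝ) (hσ' : 0 < σ') (n : ℕ) (hn : 2 ≤ n)
    (ρ' : ℝ) (hρ' : ρ' = σ' * Real.sqrt k * (1 + Real.sqrt (Real.log n / k)))
    (μ : Measure (EuclideanSpace ℝ (Fin k)))
    (hμ : μ = (Measure.pi fun _ : Fin k => gaussianReal 0 ⟨σ' ^ 2, sq_nonneg σ'⟩).map
      (MeasurableEquiv.toLp 2 (Fin k → ℝ))) :
    (∫ ε, f (w + ε) ∂μ) ≤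
      (1 - 1 / Real.sqrt n) * sSup ((fun ε => f (w + ε)) '' Metric.closedBall 0 ρ')
        + 1 / Real.sqrt n ∧
    (∫ ε, f (w + ε) ∂μ) ≤
      sSup ((fun ε => f (w + ε)) '' Metric.closedBall 0 ρ') + 1 / Real.sqrt n := by
  set v : ℝ≥0 := ⟨σ' ^ 2, sq_nonneg σ'⟩
  have hvσ : (v : ℝ) = σ' ^ 2 := rfl
  have hv : v ≠ 0 := by rw [← NNReal.coe_ne_zero, hvσ]; positivity
  change μ = isotropicGaussian (Fin k) v at hμ
  subst hμ
  have : Nonempty (Fin k) := Fin.pos_iff_nonempty.mp hk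
  have hn1 : (1 : ℝ) ≤ n := by exact_mod_cast (by omega : 1 ≤ n)
  have hρ : ρ' = √v * (√(Fintype.card (Fin k)) + √(log n)) := by
    have hk' : (0 : ℝ) < k := by exact_mod_cast hk
    rw [hρ', Fintype.card_fin, sqrt_div' _ hk'.le, hvσ, sqrt_sq hσ'.le]
    field_simp
  have htail : (isotropicGaussian (Fin k) v).real (Metric.closedBall 0 ρ')ᶜ ≤ 1 / √n := by
    calc _ ≤ exp (-(√(log n) ^ 2 / 2)) :=
          hρ ▸ isotropicGaussian_real_compl_closedBall_le hv (sqrt_nonneg _)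
      _ = 1 / √n := by rw [sq_sqrt (log_nonneg hn1), exp_neg_log_div_two (by linarith)]
  have hint : Integrable (fun ε ↦ f (w + ε)) (isotropicGaussian (Fin k) v) :=
    Integrable.of_bound (hf.comp (measurable_const_add w)).aestronglyMeasurable 1
      (ae_of_all _ fun ε ↦ (norm_of_nonneg (hf01 _).1).trans_le (hf01 _).2)
  have hmain := integral_le_one_sub_mul_sSup_image_add hint (fun ε ↦ (hf01 _).2)
    measurableSet_closedBall ⟨0, Metric.mem_closedBall_self (hρ ▸ by positivity)⟩ htail
  refine ⟨hmain, hmain.trans ?_⟩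
  have hS0 := Real.sSup_nonneg (Set.forall_mem_image.2 fun ε (_ : ε ∈ Metric.closedBall 0 ρ') ↦
    (hf01 (w + ε)).1)
  linarith [mul_nonneg (one_div_nonneg.2 (sqrt_nonneg n)) hS0]
end
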